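/- arXiv:1512.00828 — 3 statements merged into one kernel-verified Lean document; each statement's English description precedes it below -/
import Mathlib

section
/- Let 𝒢 ⊆ L^p(m) be a nonempty set of nonnegative functions that is bounded in L^p-norm, closed in L^p(m), and closed under pointwise maximum (G₁, G₂ ∈ 𝒢 implies max{G₁,G₂} ∈ 𝒢). Then there exists G ∈ 𝒢 such that G' ≤ G m-almost everywhere for every G' ∈ 𝒢; in particular ‖G‖_{L^p} = sup_{G' ∈ 𝒢} ‖G'‖_{L^p}. -/
open MeasureTheory
open scoped ENNReal

/-!
For `0 ≤ f ≤ g` in `L^p`, pointwise superadditivity of `t ↦ t ^ p` gives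
`‖g - f‖ ^ p + ‖f‖ ^ p ≤ ‖g‖ ^ p`. Hence the running maxima of a norm-maximising sequence in `𝒢`
form a Cauchy sequence, whose limit `G ∈ 𝒢` attains the supremum of the norms. For `G' ∈ 𝒢`,
the element `G ⊔ G' ∈ 𝒢` has norm at most `‖G‖`, which forces `‖G ⊔ G' - G‖ = 0`, i.e. `G' ≤ G`.
-/

theorem Real.enorm_sub_add_enorm_of_nonneg_of_le {a b : ℝ} (ha : 0 ≤ a) (hab : a ≤ b) :
    ‖b - a‖ₑ + ‖a‖ₑ = ‖b‖ₑ := by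
  rw [Real.enorm_eq_ofReal (sub_nonneg.2 hab), Real.enorm_eq_ofReal ha,
    ← ENNReal.ofReal_add (sub_nonneg.2 hab) ha, sub_add_cancel,
    Real.enorm_eq_ofReal (ha.trans hab)]

theorem eLpNorm'_sub_rpow_add_eLpNorm'_rpow_le {α : Type*} [MeasurableSpace α] {μ : Measure α}
    {q : ℝ} (hq : 1 ≤ q) {f g : α → ℝ} (hf_meas : AEStronglyMeasurable f μ)
    (hf : 0 ≤ᵐ[μ] f) (hfg : f ≤ᵐ[μ] g) :
    eLpNorm' (g - f) q μ ^ q + eLpNorm' f q μ ^ q ≤ eLpNorm' g q μ ^ q := by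
  have hq0 : 0 < q := zero_lt_one.trans_le hq
  simp only [← lintegral_rpow_enorm_eq_rpow_eLpNorm' hq0]
  rw [← lintegral_add_right' _ (hf_meas.enorm.pow_const q)]
  refine lintegral_mono_ae ?_
  filter_upwards [hf, hfg] with x hfx hfgx
  calc ‖(g - f) x‖ₑ ^ q + ‖f x‖ₑ ^ q ≤ (‖(g - f) x‖ₑ + ‖f x‖ₑ) ^ q :=
        ENNReal.add_rpow_le_rpow_add _ _ hq
    _ = ‖g x‖ₑ ^ q := by
        rw [Pi.sub_apply, Real.enorm_sub_add_enorm_of_nonneg_of_le hfx hfgx]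

theorem Lp.norm_sub_rpow_add_norm_rpow_le {α : Type*} [MeasurableSpace α] {μ : Measure α}
    {p : ℝ≥0∞} [Fact (1 ≤ p)] (hp : p ≠ ∞) {f g : Lp ℝ p μ} (hf : 0 ≤ f) (hfg : f ≤ g) :
    ‖g - f‖ ^ p.toReal + ‖f‖ ^ p.toReal ≤ ‖g‖ ^ p.toReal := by
  have hp0 : p ≠ 0 := (zero_lt_one.trans_le Fact.out).ne'
  have hp1 : 1 ≤ p.toReal := by simpa using ENNReal.toReal_mono hp (Fact.out : 1 ≤ p)
  have hfin : ∀ h : Lp ℝ p μ, eLpNorm' (h : α → ℝ) p.toReal μ ^ p.toReal ≠ ∞ := fun h =>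
    ENNReal.rpow_ne_top_of_nonneg (by positivity)
      (by rw [← eLpNorm_eq_eLpNorm' hp0 hp]; exact Lp.eLpNorm_ne_top h)
  simp only [Lp.norm_def, eLpNorm_eq_eLpNorm' hp0 hp, ENNReal.toReal_rpow]
  rw [← ENNReal.toReal_add (hfin _) (hfin _)]
  refine ENNReal.toReal_mono (hfin _) ?_
  rw [eLpNorm'_congr_ae (Lp.coeFn_sub g f)]
  exact eLpNorm'_sub_rpow_add_eLpNorm'_rpow_le hp1 (Lp.aestronglyMeasurable f)
    ((Lp.coeFn_nonneg f).2 hf) ((Lp.coeFn_le f g).2 hfg)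

section RpowSuperadditiveNorm

variable {E : Type*} [NormedAddCommGroup E] [Lattice E] {q : ℝ}

theorem norm_le_norm_of_rpow_superadditive (hq : 0 < q)
    (hE : ∀ f g : E, 0 ≤ f → f ≤ g → ‖g - f‖ ^ q + ‖f‖ ^ q ≤ ‖g‖ ^ q)
    {f g : E} (hf : 0 ≤ f) (hfg : f ≤ g) : ‖f‖ ≤ ‖g‖ := by
  refine (Real.rpow_le_rpow_iff (norm_nonneg f) (norm_nonneg g) hq).1 ?_
  linarith [hE f g hf hfg, Real.rpow_nonneg (norm_nonneg (g - f)) q]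

theorem eq_of_le_of_norm_le_of_rpow_superadditive (hq : 0 < q)
    (hE : ∀ f g : E, 0 ≤ f → f ≤ g → ‖g - f‖ ^ q + ‖f‖ ^ q ≤ ‖g‖ ^ q)
    {f g : E} (hf : 0 ≤ f) (hfg : f ≤ g) (hgf : ‖g‖ ≤ ‖f‖) : f = g := by
  have hpow : ‖g - f‖ ^ q ≤ 0 := by
    linarith [hE f g hf hfg, Real.rpow_le_rpow (norm_nonneg g) hgf hq.le]
  have hnorm : ‖g - f‖ = 0 := by
    by_contra hne
    exact hpow.not_gt (Real.rpow_pos_of_pos ((norm_nonneg _).lt_of_ne' hne) q)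
  exact (sub_eq_zero.1 (norm_eq_zero.1 hnorm)).symm

theorem cauchySeq_of_monotone_of_rpow_superadditive (hq : 0 < q)
    (hE : ∀ f g : E, 0 ≤ f → f ≤ g → ‖g - f‖ ^ q + ‖f‖ ^ q ≤ ‖g‖ ^ q)
    {F : ℕ → E} (hF : ∀ n, 0 ≤ F n) (hmono : Monotone F)
    (hbdd : BddAbove (Set.range fun n => ‖F n‖)) : CauchySeq F := by
  have hpow_mono : Monotone fun n => ‖F n‖ ^ q := fun n m hnm =>
    Real.rpow_le_rpow (norm_nonneg _)
      (norm_le_norm_of_rpow_superadditive hq hE (hF n) (hmono hnm)) hq.le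
  have hpow_bdd : BddAbove (Set.range fun n => ‖F n‖ ^ q) := by
    obtain ⟨C, hC⟩ := hbdd
    refine ⟨C ^ q, ?_⟩
    rintro _ ⟨n, rfl⟩
    exact Real.rpow_le_rpow (norm_nonneg _) (hC ⟨n, rfl⟩) hq.le
  have hpow_cauchy := (tendsto_atTop_ciSup hpow_mono hpow_bdd).cauchySeq
  rw [Metric.cauchySeq_iff'] at hpow_cauchy ⊢
  intro ε hε
  obtain ⟨N, hN⟩ := hpow_cauchy (ε ^ q) (by positivity)
  refine ⟨N, fun n hn => ?_⟩
  have hclose := hN n hn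
  rw [Real.dist_eq, abs_of_nonneg (sub_nonneg.2 (hpow_mono hn))] at hclose
  rw [dist_eq_norm, ← Real.rpow_lt_rpow_iff (norm_nonneg _) hε.le hq]
  linarith [hE (F N) (F n) (hF N) (hmono hn)]

theorem exists_isGreatest_of_rpow_superadditive [CompleteSpace E] (hq : 0 < q)
    (hE : ∀ f g : E, 0 ≤ f → f ≤ g → ‖g - f‖ ^ q + ‖f‖ ^ q ≤ ‖g‖ ^ q)
    {𝒢 : Set E} (hne : 𝒢.Nonempty) (hnonneg : ∀ G ∈ 𝒢, 0 ≤ G)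
    (hbdd : BddAbove (norm '' 𝒢)) (hclosed : IsClosed 𝒢) (hsup : SupClosed 𝒢) :
    ∃ G, IsGreatest 𝒢 G := by
  obtain ⟨u, -, hu, hu𝒢⟩ := exists_seq_tendsto_sSup (hne.image norm) hbdd
  choose g hg hgu using hu𝒢
  have hF𝒢 : ∀ n, partialSups g n ∈ 𝒢 := fun n =>
    hsup.finsetSup'_mem Finset.nonempty_Iic fun i _ => hg i
  have hFS : ∀ n, ‖partialSups g n‖ ≤ sSup (norm '' 𝒢) := fun n =>
    le_csSup hbdd (Set.mem_image_of_mem _ (hF𝒢 n))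
  have hcauchy : CauchySeq (partialSups g) :=
    cauchySeq_of_monotone_of_rpow_superadditive hq hE (fun n => hnonneg _ (hF𝒢 n))
      (partialSups g).monotone ⟨_, Set.forall_mem_range.2 hFS⟩
  obtain ⟨G, hG⟩ := cauchySeq_tendsto_of_complete hcauchy
  have hG𝒢 : G ∈ 𝒢 := hclosed.mem_of_tendsto hG (Filter.Eventually.of_forall hF𝒢)
  have hGS : sSup (norm '' 𝒢) ≤ ‖G‖ := by
    refine le_of_tendsto_of_tendsto' hu hG.norm fun n => ?_
    rw [← hgu n]
    exact norm_le_norm_of_rpow_superadditive hq hE (hnonneg _ (hg n)) (le_partialSups g n)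
  refine ⟨G, hG𝒢, fun G' hG' => ?_⟩
  have hGG' : G = G ⊔ G' :=
    eq_of_le_of_norm_le_of_rpow_superadditive hq hE (hnonneg G hG𝒢) le_sup_left
      ((le_csSup hbdd (Set.mem_image_of_mem _ (hsup hG𝒢 hG'))).trans hGS)
  exact le_sup_right.trans hGG'.ge

end RpowSuperadditiveNorm

theorem stmt1_general {α : Type*} [MeasurableSpace α] (μ : Measure α) (p : ℝ≥0∞)
    (hp' : p ≠ ∞) [Fact (1 ≤ p)]
    (𝒢 : Set (Lp ℝ p μ)) (hne : 𝒢.Nonempty)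
    (hnonneg : ∀ G ∈ 𝒢, 0 ≤ G)
    (hbdd : ∃ C : ℝ, ∀ G ∈ 𝒢, ‖G‖ ≤ C)
    (hclosed : IsClosed 𝒢)
    (hmax : ∀ G₁ ∈ 𝒢, ∀ G₂ ∈ 𝒢, G₁ ⊔ G₂ ∈ 𝒢) :
    ∃ G ∈ 𝒢, (∀ G' ∈ 𝒢, G' ≤ G) ∧ ‖G‖ = ⨆ G' : 𝒢, ‖(G' : Lp ℝ p μ)‖ := by
  have hq : 0 < p.toReal := ENNReal.toReal_pos (zero_lt_one.trans_le Fact.out).ne' hp'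
  have hE : ∀ f g : Lp ℝ p μ, 0 ≤ f → f ≤ g →
      ‖g - f‖ ^ p.toReal + ‖f‖ ^ p.toReal ≤ ‖g‖ ^ p.toReal :=
    fun _ _ => Lp.norm_sub_rpow_add_norm_rpow_le hp'
  obtain ⟨C, hC⟩ := hbdd
  obtain ⟨G, hG𝒢, hGmax⟩ := exists_isGreatest_of_rpow_superadditive hq hE hne hnonneg
    ⟨C, Set.forall_mem_image.2 hC⟩ hclosed fun G₁ h₁ G₂ h₂ => hmax G₁ h₁ G₂ h₂
  have hnorm_le : ∀ G' : 𝒢, ‖(G' : Lp ℝ p μ)‖ ≤ ‖G‖ := fun G' =>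
    norm_le_norm_of_rpow_superadditive hq hE (hnonneg _ G'.2) (hGmax G'.2)
  have hbdd' : BddAbove (Set.range fun G' : 𝒢 => ‖(G' : Lp ℝ p μ)‖) :=
    ⟨_, Set.forall_mem_range.2 hnorm_le⟩
  have : Nonempty 𝒢 := hne.to_subtype
  exact ⟨G, hG𝒢, hGmax, le_antisymm (le_ciSup hbdd' ⟨G, hG𝒢⟩) (ciSup_le hnorm_le)⟩

/-- Let `𝒢 ⊆ L^p(μ)` (with `1 < p < ∞`) be a nonempty set of nonnegative functions that is
bounded in `L^p`-norm, closed in `L^p`, and closed under pointwise maximum.  Then `𝒢` has an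
element `G` which dominates every `G' ∈ 𝒢` `μ`-almost everywhere (i.e. in the a.e.-order of
`L^p`); in particular `‖G‖ = sup_{G' ∈ 𝒢} ‖G'‖`. -/
theorem stmt1 {α : Type*} [MeasurableSpace α] (μ : Measure α) (p : ℝ≥0∞)
    (hp : 1 < p) (hp' : p ≠ ∞) [Fact (1 ≤ p)]
    (𝒢 : Set (Lp ℝ p μ)) (hne : 𝒢.Nonempty)
    (hnonneg : ∀ G ∈ 𝒢, 0 ≤ G)
    (hbdd : ∃ C : ℝ, ∀ G ∈ 𝒢, ‖G‖ ≤ C)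
    (hclosed : IsClosed 𝒢)
    (hmax : ∀ G₁ ∈ 𝒢, ∀ G₂ ∈ 𝒢, G₁ ⊔ G₂ ∈ 𝒢) :
    ∃ G ∈ 𝒢, (∀ G' ∈ 𝒢, G' ≤ G) ∧ ‖G‖ = ⨆ G' : 𝒢, ‖(G' : Lp ℝ p μ)‖ :=
  stmt1_general μ p hp' 𝒢 hne hnonneg hbdd hclosed hmax
end

section
/- Let V be a Banach space, W a reflexive Banach space, D ⊆ V a linear subspace and A : D → W a linear map. Let G ⊆ V × W be the closure of the graph of A, let W₀ = {w ∈ W : (0,w) ∈ G}, which is a closed linear subspace of W, let i : W → W/W₀ be the quotient map, and set D̄ = {v ∈ V : ∃ w ∈ W, (v,w) ∈ G}. Then the assignment Ǎ(v) := i(w), for any w ∈ W with (v,w) ∈ G, is well-defined on D̄, is a closed linear operator Ǎ : D̄ → W/W₀ with D ⊆ D̄, and satisfies Ǎv = i(Av) for all v ∈ D. -/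
/-!
The closure `G` of the graph is a closed linear relation, and so is its multivalued part
`W₀ = {w | (0, w) ∈ G}`. Pushing `G` forward along `id × (W → W ⧸ W₀)` kills exactly the
multivaluedness, so the image is the graph of an operator `Ǎ`. That graph is closed because
`id × mkQ` is an open quotient map whose kernel `0 × W₀` lies in `G`, so `G` is the full
preimage of its image.
-/

theorem LinearPMap.coe_graph {R E F : Type*} [Ring R] [AddCommGroup E] [Module R E]
    [AddCommGroup F] [Module R F] (f : E →ₗ.[R] F) :
    (f.graph : Set (E × F)) = {q | ∃ v : f.domain, q = ((v : E), f v)} := by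
  ext q
  exact f.mem_graph_iff'.trans (exists_congr fun _ => eq_comm)

namespace Submodule

variable {R E F : Type*} [Ring R] [AddCommGroup E] [Module R E] [AddCommGroup F] [Module R F]

def multivaluedPart (g : Submodule R (E × F)) : Submodule R F :=
  g.comap (LinearMap.inr R E F)

@[simp]
theorem mem_multivaluedPart {g : Submodule R (E × F)} {y : F} :
    y ∈ g.multivaluedPart ↔ ((0 : E), y) ∈ g :=
  Iff.rfl

/-- The operator `x ↦ y + g.multivaluedPart` for `(x, y) ∈ g`. -/
noncomputable def toQuotientLinearPMap (g : Submodule R (E × F)) :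
    E →ₗ.[R] F ⧸ g.multivaluedPart :=
  (g.map (LinearMap.id.prodMap g.multivaluedPart.mkQ)).toLinearPMap

theorem map_prodMap_mkQ_fst_eq_zero (g : Submodule R (E × F))
    (x : E × (F ⧸ g.multivaluedPart))
    (hx : x ∈ g.map (LinearMap.id.prodMap g.multivaluedPart.mkQ))
    (hx₁ : x.1 = 0) : x.2 = 0 := by
  obtain ⟨⟨a, b⟩, hab, rfl⟩ := hx
  simp only [LinearMap.prodMap_apply, LinearMap.id_coe, id_eq] at hx₁ ⊢
  subst hx₁
  exact (Quotient.mk_eq_zero _).2 hab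

theorem graph_toQuotientLinearPMap (g : Submodule R (E × F)) :
    g.toQuotientLinearPMap.graph = g.map (LinearMap.id.prodMap g.multivaluedPart.mkQ) :=
  toLinearPMap_graph_eq _ g.map_prodMap_mkQ_fst_eq_zero

theorem toQuotientLinearPMap_domain (g : Submodule R (E × F)) :
    g.toQuotientLinearPMap.domain = g.map (LinearMap.fst R E F) := by
  rw [toQuotientLinearPMap, toLinearPMap_domain, ← map_comp]
  rfl

theorem toQuotientLinearPMap_apply {g : Submodule R (E × F)} (x : g.toQuotientLinearPMap.domain)
    {y : F} (hxy : ((x : E), y) ∈ g) : g.toQuotientLinearPMap x = Quotient.mk y := by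
  refine g.toQuotientLinearPMap.mem_graph_snd_inj (g.toQuotientLinearPMap.mem_graph x) ?_ rfl
  rw [graph_toQuotientLinearPMap]
  exact ⟨_, hxy, rfl⟩

variable [TopologicalSpace E] [TopologicalSpace F]

theorem isClosed_multivaluedPart {g : Submodule R (E × F)} (hg : IsClosed (g : Set (E × F))) :
    IsClosed (g.multivaluedPart : Set F) :=
  hg.preimage (continuous_const.prodMk continuous_id)

theorem isClosed_toQuotientLinearPMap [ContinuousAdd F] {g : Submodule R (E × F)}
    (hg : IsClosed (g : Set (E × F))) :
    IsClosed (g.toQuotientLinearPMap.graph : Set (E × (F ⧸ g.multivaluedPart))) := by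
  set π := (LinearMap.id : E →ₗ[R] E).prodMap g.multivaluedPart.mkQ
  have hπ : IsOpenQuotientMap π :=
    IsOpenQuotientMap.id.prodMap g.multivaluedPart.isOpenQuotientMap_mkQ
  have hker : LinearMap.ker π ≤ g := by
    rintro ⟨a, b⟩ hab
    simp only [π, LinearMap.ker_prodMap, LinearMap.ker_id, ker_mkQ, mem_prod, mem_bot] at hab
    obtain ⟨rfl, hb⟩ := hab
    exact hb
  rw [graph_toQuotientLinearPMap, ← hπ.isQuotientMap.isClosed_preimage]
  rwa [← comap_coe, comap_map_eq_self hker]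

end Submodule

theorem stmt7_general {V W : Type*}
    [NormedAddCommGroup V] [NormedSpace ℝ V]
    [NormedAddCommGroup W] [NormedSpace ℝ W]
    (D : Submodule ℝ V) (A : D →ₗ[ℝ] W) :
    ∃ W₀ : Submodule ℝ W, IsClosed (W₀ : Set W) ∧
      (W₀ : Set W) = {w : W | ((0 : V), w) ∈
        closure {q : V × W | ∃ v : D, q = ((v : V), A v)}} ∧
      ∃ (Dbar : Submodule ℝ V) (Acl : Dbar →ₗ[ℝ] (W ⧸ W₀)),
        (Dbar : Set V) = {v : V | ∃ w : W, (v, w) ∈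
          closure {q : V × W | ∃ v' : D, q = ((v' : V), A v')}} ∧
        (D : Set V) ⊆ (Dbar : Set V) ∧
        (∀ (v : Dbar) (w : W),
          ((v : V), w) ∈ closure {q : V × W | ∃ v' : D, q = ((v' : V), A v')} →
          Acl v = Submodule.Quotient.mk w) ∧
        (∀ (v : D) (hv : (v : V) ∈ Dbar),
          Acl ⟨(v : V), hv⟩ = Submodule.Quotient.mk (A v)) ∧
        IsClosed {q : V × (W ⧸ W₀) | ∃ v : Dbar, q = ((v : V), Acl v)} := by
  set A' : V →ₗ.[ℝ] W := ⟨D, A⟩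
  set G := A'.graph.topologicalClosure
  have hG : (G : Set (V × W)) = closure {q : V × W | ∃ v : D, q = ((v : V), A v)} := by
    rw [Submodule.topologicalClosure_coe, LinearPMap.coe_graph]
    rfl
  have hGclosed : IsClosed (G : Set (V × W)) := Submodule.isClosed_topologicalClosure _
  have hAG : ∀ v : D, ((v : V), A v) ∈ G := fun v =>
    A'.graph.le_topologicalClosure (A'.mem_graph v)
  set f := G.toQuotientLinearPMap
  have hdom : ∀ v : V, v ∈ f.domain ↔ ∃ w : W, (v, w) ∈ G := by
    simp [f, Submodule.toQuotientLinearPMap_domain]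
  refine ⟨G.multivaluedPart, Submodule.isClosed_multivaluedPart hGclosed, ?_, f.domain, f.toFun,
    ?_, fun v hv => (hdom v).2 ⟨_, hAG ⟨v, hv⟩⟩, ?_, ?_, ?_⟩
  · ext w; rw [SetLike.mem_coe, G.mem_multivaluedPart, ← SetLike.mem_coe, hG]; rfl
  · ext v; rw [SetLike.mem_coe, hdom, ← hG]; rfl
  · intro v w hw
    exact Submodule.toQuotientLinearPMap_apply v (by rwa [← SetLike.mem_coe, hG])
  · intro v hv
    exact Submodule.toQuotientLinearPMap_apply _ (hAG v)
  · have := Submodule.isClosed_toQuotientLinearPMap hGclosed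
    rwa [LinearPMap.coe_graph] at this

/-- Closure of a partially defined linear operator into a reflexive Banach space: let
`V, W` be Banach spaces with `W` reflexive, `D ⊆ V` a subspace and `A : D → W` linear.
With `G` the closure of the graph of `A`, `W₀ = {w : (0,w) ∈ G}` is a closed subspace of `W`,
and setting `D̄ = {v : ∃ w, (v,w) ∈ G}`, the assignment `Ǎ v := i w` (for any `w` with
`(v,w) ∈ G`, `i : W → W/W₀` the quotient map) is a well-defined closed linear operator
`Ǎ : D̄ → W/W₀` with `D ⊆ D̄` and `Ǎ v = i (A v)` for `v ∈ D`. -/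
theorem stmt7 {V W : Type*}
    [NormedAddCommGroup V] [NormedSpace ℝ V] [CompleteSpace V]
    [NormedAddCommGroup W] [NormedSpace ℝ W] [CompleteSpace W]
    (hrefl : Function.Surjective (NormedSpace.inclusionInDoubleDual ℝ W))
    (D : Submodule ℝ V) (A : D →ₗ[ℝ] W) :
    ∃ W₀ : Submodule ℝ W, IsClosed (W₀ : Set W) ∧
      (W₀ : Set W) = {w : W | ((0 : V), w) ∈
        closure {q : V × W | ∃ v : D, q = ((v : V), A v)}} ∧
      ∃ (Dbar : Submodule ℝ V) (Acl : Dbar →ₗ[ℝ] (W ⧸ W₀)),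
        (Dbar : Set V) = {v : V | ∃ w : W, (v, w) ∈
          closure {q : V × W | ∃ v' : D, q = ((v' : V), A v')}} ∧
        (D : Set V) ⊆ (Dbar : Set V) ∧
        (∀ (v : Dbar) (w : W),
          ((v : V), w) ∈ closure {q : V × W | ∃ v' : D, q = ((v' : V), A v')} →
          Acl v = Submodule.Quotient.mk w) ∧
        (∀ (v : D) (hv : (v : V) ∈ Dbar),
          Acl ⟨(v : V), hv⟩ = Submodule.Quotient.mk (A v)) ∧
        IsClosed {q : V × (W ⧸ W₀) | ∃ v : Dbar, q = ((v : V), Acl v)} :=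
  stmt7_general D A
end

section
/- Let (M,d,m) be a complete metric measure space with m a Radon measure finite on bounded sets. Define the Cheeger energy Ch₂ : L⁰(m) → [0,∞] by Ch₂(f) = inf{ liminf_n ∫ (lip f_n)² dm : f_n Lipschitz with lip f_n ∈ L²(m), f_n → f in L⁰(m) }. Assume (M,d,m) is infinitesimally Riemannian: for all Lipschitz functions f, g with lip f, lip g ∈ L²(m), the parallelogram identity (lip(f+g))² + (lip(f−g))² = 2(lip f)² + 2(lip g)² holds m-almost everywhere. Then (M,d,m) is infinitesimally Hilbertian: Ch₂ is a quadratic form, i.e. Ch₂(f+g) + Ch₂(f−g) = 2Ch₂(f) + 2Ch₂(g) for all f, g ∈ L⁰(m). -/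
open MeasureTheory Filter
open scoped ENNReal NNReal

/-- Convergence in L⁰(μ): convergence in measure on every measurable set of finite measure. -/
def TendstoL0 {α : Type*} [MeasurableSpace α] (μ : Measure α) (f : ℕ → α → ℝ) (g : α → ℝ) :
    Prop :=
  ∀ A : Set α, MeasurableSet A → μ A < ∞ → TendstoInMeasure (μ.restrict A) f atTop g

/-- The local Lipschitz constant (slope) `lip f (x) = limsup_{y → x} |f y - f x| / d(y,x)`,
equal to `0` at isolated points. -/
noncomputable def lip {M : Type*} [PseudoMetricSpace M] (f : M → ℝ) (x : M) : ℝ :=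
  Filter.limsup (fun y => |f y - f x| / dist y x) (nhdsWithin x {x}ᶜ)

/-- The Cheeger energy
`Ch₂(f) = inf { liminf_n ∫ (lip fₙ)² dμ : fₙ Lipschitz, lip fₙ ∈ L²(μ), fₙ → f in L⁰(μ) }`. -/
noncomputable def Ch2 {M : Type*} [PseudoMetricSpace M] [MeasurableSpace M] (μ : Measure M)
    (f : M → ℝ) : ℝ≥0∞ :=
  ⨅ (fn : ℕ → M → ℝ)
    (_ : ∀ n, (∃ K : ℝ≥0, LipschitzWith K (fn n)) ∧ MemLp (lip (fn n)) 2 μ)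
    (_ : TendstoL0 μ fn f),
    atTop.liminf fun n => ∫⁻ x, ENNReal.ofReal (lip (fn n) x ^ 2) ∂μ

/-!
Take Lipschitz sequences `Fₙ → f` and `Gₙ → g` in `L⁰` whose energies `∫ (lip Fₙ)²`, `∫ (lip Gₙ)²`
stay below `Ch₂ f + δ`, `Ch₂ g + δ` term by term (a subsequence of a nearly optimal sequence).
Then `Fₙ ± Gₙ → f ± g` are competitors for `Ch₂ (f ± g)`, and integrating the a.e. parallelogram
identity for `lip` gives `Ch₂ (f + g) + Ch₂ (f - g) ≤ 2 Ch₂ f + 2 Ch₂ g`. Applied to `f + g` and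
`f - g`, together with the homogeneity `Ch₂ (2 f) = 4 Ch₂ f`, this yields the reverse inequality.
-/

open Metric
open scoped Topology

section Slope

variable {M : Type*} [MetricSpace M] {K K₁ K₂ : ℝ≥0} {h h₁ h₂ : M → ℝ} {x : M}

/-- At `y = x` this is `0 / 0 = 0`. -/
noncomputable def diffQuot (h : M → ℝ) (x y : M) : ℝ := |h y - h x| / dist y x

lemma lip_eq_limsup (h : M → ℝ) (x : M) : lip h x = limsup (diffQuot h x) (𝓝[≠] x) := rfl

lemma diffQuot_nonneg (h : M → ℝ) (x y : M) : 0 ≤ diffQuot h x y :=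
  div_nonneg (abs_nonneg _) dist_nonneg

lemma LipschitzWith.diffQuot_le (hh : LipschitzWith K h) (x y : M) : diffQuot h x y ≤ K :=
  div_le_of_le_mul₀ dist_nonneg K.coe_nonneg (by simpa [Real.dist_eq] using hh.dist_le_mul y x)

lemma LipschitzWith.isBoundedUnder_le_diffQuot (hh : LipschitzWith K h) (l : Filter M) (x : M) :
    IsBoundedUnder (· ≤ ·) l (diffQuot h x) :=
  isBoundedUnder_of ⟨K, hh.diffQuot_le x⟩

lemma isCoboundedUnder_le_diffQuot (h : M → ℝ) (l : Filter M) [l.NeBot] (x : M) :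
    IsCoboundedUnder (· ≤ ·) l (diffQuot h x) :=
  (isBoundedUnder_of ⟨0, diffQuot_nonneg h x⟩).isCoboundedUnder_le

lemma lip_of_nhdsNE_eq_bot (h : M → ℝ) (hx : 𝓝[≠] x = ⊥) : lip h x = 0 := by
  simp [lip_eq_limsup, hx, limsup_eq]

lemma lip_nonneg (hh : LipschitzWith K h) (x : M) : 0 ≤ lip h x := by
  rcases (𝓝[≠] x).eq_or_neBot with hx | _
  · rw [lip_of_nhdsNE_eq_bot h hx]
  · exact le_limsup_of_frequently_le (.of_forall (diffQuot_nonneg h x))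
      (hh.isBoundedUnder_le_diffQuot _ x)

lemma lip_le_of_eventually_le {b : ℝ} (hb : 0 ≤ b) (hev : ∀ᶠ y in 𝓝[≠] x, diffQuot h x y ≤ b) :
    lip h x ≤ b := by
  rcases (𝓝[≠] x).eq_or_neBot with hx | _
  · rwa [lip_of_nhdsNE_eq_bot h hx]
  · exact limsup_le_of_le (isCoboundedUnder_le_diffQuot h _ x) hev

lemma lip_neg (h : M → ℝ) : lip (-h) = lip h := by
  ext x
  refine congrArg (limsup · _) (funext fun y => ?_)
  simp only [Pi.neg_apply, neg_sub_neg]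
  rw [abs_sub_comm]

lemma lip_const_smul (hh : LipschitzWith K h) (c : ℝ) (x : M) :
    lip (c • h) x = |c| * lip h x := by
  rcases (𝓝[≠] x).eq_or_neBot with hx | _
  · simp [lip_of_nhdsNE_eq_bot _ hx]
  have hquot : diffQuot (c • h) x = (|c| * ·) ∘ diffQuot h x := by
    ext y
    simp only [diffQuot, Pi.smul_apply, smul_eq_mul, ← mul_sub, abs_mul, Function.comp_apply,
      mul_div_assoc]
  rw [lip_eq_limsup, lip_eq_limsup, hquot]
  exact ((monotone_mul_left_of_nonneg (abs_nonneg c)).map_limsup_of_continuousAt _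
    (continuous_const_mul _).continuousAt (hh.isBoundedUnder_le_diffQuot _ x)
    (isCoboundedUnder_le_diffQuot h _ x)).symm

lemma lip_add_le (hh₁ : LipschitzWith K₁ h₁) (hh₂ : LipschitzWith K₂ h₂) (x : M) :
    lip (h₁ + h₂) x ≤ lip h₁ x + lip h₂ x := by
  refine le_add_of_forall_lt fun a ha b hb => lip_le_of_eventually_le
    (add_nonneg ((lip_nonneg hh₁ x).trans ha.le) ((lip_nonneg hh₂ x).trans hb.le)) ?_
  filter_upwards [eventually_lt_of_limsup_lt ha (hh₁.isBoundedUnder_le_diffQuot _ x),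
    eventually_lt_of_limsup_lt hb (hh₂.isBoundedUnder_le_diffQuot _ x)] with y hya hyb
  calc diffQuot (h₁ + h₂) x y ≤ diffQuot h₁ x y + diffQuot h₂ x y := by
        rw [diffQuot, diffQuot, diffQuot, ← add_div]
        gcongr
        simpa only [Pi.add_apply, add_sub_add_comm] using abs_add_le _ _
    _ ≤ a + b := add_le_add hya.le hyb.le

end Slope

section Measurability

variable {M : Type*} [MetricSpace M] {K : ℝ≥0} {h : M → ℝ}

/-- Since `lip h = ⨅ n, diffQuotSup h (1 / (n + 1))` and each `diffQuotSup h r` is lower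
semicontinuous, `lip h` is Borel measurable. -/
noncomputable def diffQuotSup (h : M → ℝ) (r : ℝ) (x : M) : ℝ := sSup (diffQuot h x '' ball x r)

lemma diffQuotSup_nonneg (h : M → ℝ) (r : ℝ) (x : M) : 0 ≤ diffQuotSup h r x :=
  Real.sSup_nonneg (Set.forall_mem_image.2 fun y _ => diffQuot_nonneg h x y)

lemma LipschitzWith.le_diffQuotSup (hh : LipschitzWith K h) {r : ℝ} {x y : M}
    (hy : y ∈ ball x r) : diffQuot h x y ≤ diffQuotSup h r x :=
  le_csSup ⟨K, Set.forall_mem_image.2 fun y _ => hh.diffQuot_le x y⟩ (Set.mem_image_of_mem _ hy)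

lemma LipschitzWith.lowerSemicontinuous_diffQuotSup (hh : LipschitzWith K h) (r : ℝ) :
    LowerSemicontinuous (diffQuotSup h r) := by
  intro x c hc
  rcases lt_or_ge c 0 with hc0 | hc0
  · exact .of_forall fun x' => hc0.trans_le (diffQuotSup_nonneg h r x')
  have hball : (ball x r).Nonempty := by
    by_contra hempty
    simp [diffQuotSup, Set.not_nonempty_iff_eq_empty.1 hempty] at hc
    linarith
  obtain ⟨_, ⟨y, hyx, rfl⟩, hcy⟩ := exists_lt_of_lt_csSup (hball.image _) hc
  have hd : 0 < dist y x := dist_pos.2 fun hyx => by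
    simp [hyx, diffQuot] at hcy
    linarith
  have hcont : ContinuousAt (fun x' => diffQuot h x' y) x :=
    ((continuous_const.sub hh.continuous).abs.continuousAt).div
      (continuous_const.dist continuous_id).continuousAt hd.ne'
  filter_upwards [hcont.eventually (eventually_gt_nhds hcy),
    (continuous_const.dist continuous_id).continuousAt.eventually
      (eventually_lt_nhds (mem_ball.1 hyx))] with x' hc' hr'
  exact hc'.trans_le (hh.le_diffQuotSup hr')

lemma LipschitzWith.lip_eq_iInf_diffQuotSup (hh : LipschitzWith K h) (x : M) :
    lip h x = ⨅ n : ℕ, diffQuotSup h (1 / (n + 1)) x := by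
  refine le_antisymm (le_ciInf fun n => lip_le_of_eventually_le (diffQuotSup_nonneg h _ x) ?_)
    (le_of_forall_gt_imp_ge_of_dense fun b hb => ?_)
  · exact eventually_nhdsWithin_of_eventually_nhds
      (mem_of_superset (ball_mem_nhds x Nat.one_div_pos_of_nat) fun y => hh.le_diffQuotSup)
  obtain ⟨δ, hδ, hball⟩ := (nhdsWithin_basis_ball.eventually_iff).1
    (eventually_lt_of_limsup_lt hb (hh.isBoundedUnder_le_diffQuot _ x))
  obtain ⟨n, hn⟩ := exists_nat_one_div_lt hδ
  have hb0 : 0 ≤ b := (lip_nonneg hh x).trans hb.le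
  refine (ciInf_le ⟨0, Set.forall_mem_range.2 fun n => diffQuotSup_nonneg h _ x⟩ n).trans
    (Real.sSup_le (Set.forall_mem_image.2 fun y hy => ?_) hb0)
  rcases eq_or_ne y x with rfl | hyx
  · simpa [diffQuot] using hb0
  · exact (hball ⟨ball_subset_ball hn.le hy, hyx⟩).le

lemma LipschitzWith.measurable_lip [MeasurableSpace M] [OpensMeasurableSpace M]
    (hh : LipschitzWith K h) : Measurable (lip h) := by
  simp_rw [funext hh.lip_eq_iInf_diffQuotSup]
  exact .iInf fun n => (hh.lowerSemicontinuous_diffQuotSup _).measurable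

end Measurability

namespace MeasureTheory.TendstoInMeasure

variable {α ι E : Type*} [MeasurableSpace α] {μ : Measure α} {l : Filter ι}
  [SeminormedAddCommGroup E] {F G : ι → α → E} {f g : α → E}

protected lemma add (hF : TendstoInMeasure μ F l f) (hG : TendstoInMeasure μ G l g) :
    TendstoInMeasure μ (F + G) l (f + g) := by
  rw [tendstoInMeasure_iff_norm] at hF hG ⊢
  intro ε hε
  have hsplit : ∀ i, {x | ε ≤ ‖(F + G) i x - (f + g) x‖}
      ⊆ {x | ε / 2 ≤ ‖F i x - f x‖} ∪ {x | ε / 2 ≤ ‖G i x - g x‖} := by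
    intro i x hx
    simp only [Set.mem_union, Set.mem_ofPred_eq, Pi.add_apply, add_sub_add_comm] at hx ⊢
    by_contra! hlt
    linarith [norm_add_le (F i x - f x) (G i x - g x)]
  refine tendsto_of_tendsto_of_tendsto_of_le_of_le tendsto_const_nhds
    (by simpa using (hF _ (half_pos hε)).add (hG _ (half_pos hε))) (fun _ => zero_le)
    fun i => (measure_mono (hsplit i)).trans (measure_union_le _ _)

protected lemma neg (hF : TendstoInMeasure μ F l f) : TendstoInMeasure μ (-F) l (-f) := by
  rw [tendstoInMeasure_iff_norm] at hF ⊢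
  simpa only [Pi.neg_apply, neg_sub_neg, norm_sub_rev] using hF

protected lemma sub (hF : TendstoInMeasure μ F l f) (hG : TendstoInMeasure μ G l g) :
    TendstoInMeasure μ (F - G) l (f - g) := by
  simpa only [sub_eq_add_neg] using hF.add hG.neg

protected lemma const_smul {𝕜 : Type*} [SeminormedRing 𝕜] [Module 𝕜 E] [IsBoundedSMul 𝕜 E]
    (c : 𝕜) (hF : TendstoInMeasure μ F l f) : TendstoInMeasure μ (c • F) l (c • f) := by
  rw [tendstoInMeasure_iff_norm] at hF ⊢
  intro ε hε
  have hc : 0 < ‖c‖ + 1 := by positivity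
  have hsub : ∀ i, {x | ε ≤ ‖(c • F) i x - (c • f) x‖} ⊆ {x | ε / (‖c‖ + 1) ≤ ‖F i x - f x‖} := by
    intro i x hx
    simp only [Set.mem_ofPred_eq, Pi.smul_apply, ← smul_sub] at hx ⊢
    rw [div_le_iff₀ hc]
    calc ε ≤ ‖c • (F i x - f x)‖ := hx
      _ ≤ ‖c‖ * ‖F i x - f x‖ := norm_smul_le _ _
      _ ≤ ‖F i x - f x‖ * (‖c‖ + 1) := by nlinarith [norm_nonneg (F i x - f x)]
  exact tendsto_of_tendsto_of_tendsto_of_le_of_le tendsto_const_nhds (hF _ (div_pos hε hc))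
    (fun _ => zero_le) fun i => measure_mono (hsub i)

end MeasureTheory.TendstoInMeasure

namespace TendstoL0

variable {α : Type*} [MeasurableSpace α] {μ : Measure α} {F G : ℕ → α → ℝ} {f g : α → ℝ}

lemma comp (hF : TendstoL0 μ F f) {φ : ℕ → ℕ} (hφ : Tendsto φ atTop atTop) :
    TendstoL0 μ (F ∘ φ) f :=
  fun A hA hμA => (hF A hA hμA).comp hφ

protected lemma add (hF : TendstoL0 μ F f) (hG : TendstoL0 μ G g) : TendstoL0 μ (F + G) (f + g) :=
  fun A hA hμA => (hF A hA hμA).add (hG A hA hμA)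

protected lemma sub (hF : TendstoL0 μ F f) (hG : TendstoL0 μ G g) : TendstoL0 μ (F - G) (f - g) :=
  fun A hA hμA => (hF A hA hμA).sub (hG A hA hμA)

protected lemma const_smul (c : ℝ) (hF : TendstoL0 μ F f) : TendstoL0 μ (c • F) (c • f) :=
  fun A hA hμA => (hF A hA hμA).const_smul c

end TendstoL0

lemma ENNReal.le_liminf_add (u v : ℕ → ℝ≥0∞) :
    liminf u atTop + liminf v atTop ≤ liminf (u + v) atTop := by
  simp only [liminf_eq_iSup_iInf_of_nat]
  refine ENNReal.iSup_add_iSup_le fun n m => le_iSup_of_le (max n m) <| le_iInf₂ fun i hi => ?_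
  exact add_le_add (iInf₂_le i (le_of_max_le_left hi)) (iInf₂_le i (le_of_max_le_right hi))

section Cheeger

variable {M : Type*} [MetricSpace M] [MeasurableSpace M]

def IsCheegerAdmissible (μ : Measure M) (h : M → ℝ) : Prop :=
  (∃ K : ℝ≥0, LipschitzWith K h) ∧ MemLp (lip h) 2 μ

noncomputable def lipEnergy (μ : Measure M) (h : M → ℝ) : ℝ≥0∞ :=
  ∫⁻ x, ENNReal.ofReal (lip h x ^ 2) ∂μ

def IsInfinitesimallyRiemannian (μ : Measure M) : Prop :=
  ∀ f g : M → ℝ,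
    (∃ K : ℝ≥0, LipschitzWith K f) → (∃ K : ℝ≥0, LipschitzWith K g) →
    MemLp (lip f) 2 μ → MemLp (lip g) 2 μ →
    ∀ᵐ x ∂μ, lip (f + g) x ^ 2 + lip (f - g) x ^ 2 = 2 * lip f x ^ 2 + 2 * lip g x ^ 2

variable {μ : Measure M} {F G : M → ℝ} {f g : M → ℝ}

lemma IsCheegerAdmissible.add [OpensMeasurableSpace M] (hF : IsCheegerAdmissible μ F)
    (hG : IsCheegerAdmissible μ G) : IsCheegerAdmissible μ (F + G) := by
  obtain ⟨⟨K₁, hK₁⟩, hF₂⟩ := hF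
  obtain ⟨⟨K₂, hK₂⟩, hG₂⟩ := hG
  have hK : LipschitzWith (K₁ + K₂) (F + G) := hK₁.add hK₂
  refine ⟨⟨_, hK⟩, (hF₂.add hG₂).of_le hK.measurable_lip.aestronglyMeasurable
    (.of_forall fun x => ?_)⟩
  rw [Real.norm_of_nonneg (lip_nonneg hK x), Pi.add_apply,
    Real.norm_of_nonneg (add_nonneg (lip_nonneg hK₁ x) (lip_nonneg hK₂ x))]
  exact lip_add_le hK₁ hK₂ x

lemma IsCheegerAdmissible.neg (hF : IsCheegerAdmissible μ F) : IsCheegerAdmissible μ (-F) := by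
  obtain ⟨⟨K, hK⟩, hF₂⟩ := hF
  exact ⟨⟨K, hK.neg⟩, lip_neg F ▸ hF₂⟩

lemma IsCheegerAdmissible.sub [OpensMeasurableSpace M] (hF : IsCheegerAdmissible μ F)
    (hG : IsCheegerAdmissible μ G) : IsCheegerAdmissible μ (F - G) :=
  sub_eq_add_neg F G ▸ hF.add hG.neg

lemma IsCheegerAdmissible.const_smul (hF : IsCheegerAdmissible μ F) (c : ℝ) :
    IsCheegerAdmissible μ (c • F) := by
  obtain ⟨⟨K, hK⟩, hF₂⟩ := hF
  refine ⟨⟨_, (lipschitzWith_smul c).comp hK⟩, ?_⟩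
  rw [funext (lip_const_smul hK c)]
  exact hF₂.const_mul _

lemma LipschitzWith.lipEnergy_const_smul {K : ℝ≥0} (hF : LipschitzWith K F) (c : ℝ) :
    lipEnergy μ (c • F) = ENNReal.ofReal (c ^ 2) * lipEnergy μ F := by
  simp_rw [lipEnergy, lip_const_smul hF, mul_pow, sq_abs, ENNReal.ofReal_mul (sq_nonneg c)]
  exact lintegral_const_mul' _ _ ENNReal.ofReal_ne_top

lemma IsInfinitesimallyRiemannian.lipEnergy_add_add_lipEnergy_sub [OpensMeasurableSpace M]
    (hμ : IsInfinitesimallyRiemannian μ) (hF : IsCheegerAdmissible μ F)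
    (hG : IsCheegerAdmissible μ G) :
    lipEnergy μ (F + G) + lipEnergy μ (F - G) = 2 * lipEnergy μ F + 2 * lipEnergy μ G := by
  have hmeas {H : M → ℝ} (hH : IsCheegerAdmissible μ H) :
      AEMeasurable (fun x => ENNReal.ofReal (lip H x ^ 2)) μ :=
    (hH.2.aestronglyMeasurable.aemeasurable.pow_const 2).ennreal_ofReal
  rw [lipEnergy, lipEnergy, ← lintegral_add_left' (hmeas (hF.add hG)), lipEnergy, lipEnergy,
    ← lintegral_const_mul' _ _ ENNReal.ofNat_ne_top,
    ← lintegral_const_mul' _ _ ENNReal.ofNat_ne_top,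
    ← lintegral_add_left' ((hmeas hF).const_mul 2)]
  refine lintegral_congr_ae ?_
  filter_upwards [hμ F G hF.1 hG.1 hF.2 hG.2] with x hx
  rw [← ENNReal.ofReal_add (sq_nonneg _) (sq_nonneg _), hx,
    ENNReal.ofReal_add (by positivity) (by positivity), ENNReal.ofReal_mul zero_le_two,
    ENNReal.ofReal_mul zero_le_two, ENNReal.ofReal_ofNat]

lemma Ch2_le_liminf {fn : ℕ → M → ℝ} (hadm : ∀ n, IsCheegerAdmissible μ (fn n))
    (hconv : TendstoL0 μ fn f) : Ch2 μ f ≤ liminf (fun n => lipEnergy μ (fn n)) atTop :=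
  iInf₂_le_of_le fn hadm (iInf_le _ hconv)

lemma exists_seq_lipEnergy_lt_of_Ch2_lt {C : ℝ≥0∞} (hC : Ch2 μ f < C) :
    ∃ fn : ℕ → M → ℝ, (∀ n, IsCheegerAdmissible μ (fn n)) ∧ TendstoL0 μ fn f ∧
      ∀ n, lipEnergy μ (fn n) < C := by
  simp only [Ch2, iInf_lt_iff] at hC
  obtain ⟨fn, hadm, hconv, hlt⟩ := hC
  obtain ⟨φ, hφ, hφlt⟩ :=
    extraction_of_frequently_atTop (frequently_lt_of_liminf_lt (by isBoundedDefault) hlt)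
  exact ⟨fn ∘ φ, fun n => hadm (φ n), hconv.comp hφ.tendsto_atTop, hφlt⟩

lemma IsInfinitesimallyRiemannian.Ch2_add_add_Ch2_sub_le_of_lt [OpensMeasurableSpace M]
    (hμ : IsInfinitesimallyRiemannian μ) {C D : ℝ≥0∞} (hC : Ch2 μ f < C) (hD : Ch2 μ g < D) :
    Ch2 μ (f + g) + Ch2 μ (f - g) ≤ 2 * C + 2 * D := by
  obtain ⟨F, hF, hFf, hFC⟩ := exists_seq_lipEnergy_lt_of_Ch2_lt hC
  obtain ⟨G, hG, hGg, hGD⟩ := exists_seq_lipEnergy_lt_of_Ch2_lt hD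
  have hbound (n : ℕ) : lipEnergy μ (F n + G n) + lipEnergy μ (F n - G n) ≤ 2 * C + 2 * D := by
    rw [hμ.lipEnergy_add_add_lipEnergy_sub (hF n) (hG n)]
    gcongr
    exacts [(hFC n).le, (hGD n).le]
  calc Ch2 μ (f + g) + Ch2 μ (f - g)
      ≤ liminf (fun n => lipEnergy μ (F n + G n)) atTop
        + liminf (fun n => lipEnergy μ (F n - G n)) atTop :=
        add_le_add (Ch2_le_liminf (fun n => (hF n).add (hG n)) (hFf.add hGg))
          (Ch2_le_liminf (fun n => (hF n).sub (hG n)) (hFf.sub hGg))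
    _ ≤ liminf (fun n => lipEnergy μ (F n + G n) + lipEnergy μ (F n - G n)) atTop :=
        ENNReal.le_liminf_add _ _
    _ ≤ 2 * C + 2 * D := liminf_le_of_frequently_le' (.of_forall hbound)

lemma IsInfinitesimallyRiemannian.Ch2_add_add_Ch2_sub_le [OpensMeasurableSpace M]
    (hμ : IsInfinitesimallyRiemannian μ) (f g : M → ℝ) :
    Ch2 μ (f + g) + Ch2 μ (f - g) ≤ 2 * Ch2 μ f + 2 * Ch2 μ g := by
  refine ENNReal.le_of_forall_pos_le_add fun ε hε hfin => ?_
  have hδ : ((ε / 4 : ℝ≥0) : ℝ≥0∞) ≠ 0 := by simpa using hε.ne'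
  have hf : Ch2 μ f ≠ ∞ :=
    ne_top_of_le_ne_top hfin.ne (le_add_right (le_mul_of_one_le_left' one_le_two))
  have hg : Ch2 μ g ≠ ∞ :=
    ne_top_of_le_ne_top hfin.ne (le_add_left (le_mul_of_one_le_left' one_le_two))
  calc Ch2 μ (f + g) + Ch2 μ (f - g)
      ≤ 2 * (Ch2 μ f + ↑(ε / 4)) + 2 * (Ch2 μ g + ↑(ε / 4)) :=
        hμ.Ch2_add_add_Ch2_sub_le_of_lt (ENNReal.lt_add_right hf hδ) (ENNReal.lt_add_right hg hδ)
    _ = 2 * Ch2 μ f + 2 * Ch2 μ g + ↑(4 * (ε / 4)) := by push_cast; ring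
    _ = 2 * Ch2 μ f + 2 * Ch2 μ g + ε := by rw [mul_div_cancel₀ _ four_ne_zero]

lemma Ch2_const_smul_le {c : ℝ} (hc : c ≠ 0) (f : M → ℝ) :
    Ch2 μ (c • f) ≤ ENNReal.ofReal (c ^ 2) * Ch2 μ f := by
  have hc₂ : ENNReal.ofReal (c ^ 2) ≠ 0 := (ENNReal.ofReal_pos.2 (by positivity)).ne'
  conv_rhs => rw [Ch2]
  simp_rw [ENNReal.mul_iInf_of_ne hc₂ ENNReal.ofReal_ne_top]
  refine le_iInf₂ fun fn (hadm : ∀ n, IsCheegerAdmissible μ (fn n)) =>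
    le_iInf fun hconv => ?_
  have henergy (n : ℕ) : lipEnergy μ (c • fn n) = ENNReal.ofReal (c ^ 2) * lipEnergy μ (fn n) :=
    (hadm n).1.elim fun _ hK => hK.lipEnergy_const_smul c
  calc Ch2 μ (c • f) ≤ liminf (fun n => lipEnergy μ (c • fn n)) atTop :=
        Ch2_le_liminf (fun n => (hadm n).const_smul c) (hconv.const_smul c)
    _ = _ := by
        simp_rw [henergy]
        exact ENNReal.liminf_const_mul_of_ne_zero_of_ne_top hc₂ ENNReal.ofReal_ne_top

lemma Ch2_const_smul {c : ℝ} (hc : c ≠ 0) (f : M → ℝ) :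
    Ch2 μ (c • f) = ENNReal.ofReal (c ^ 2) * Ch2 μ f := by
  refine le_antisymm (Ch2_const_smul_le hc f) ?_
  have hinv := Ch2_const_smul_le (μ := μ) (inv_ne_zero hc) (c • f)
  rw [inv_smul_smul₀ hc] at hinv
  calc ENNReal.ofReal (c ^ 2) * Ch2 μ f
      ≤ ENNReal.ofReal (c ^ 2) * (ENNReal.ofReal (c⁻¹ ^ 2) * Ch2 μ (c • f)) := by gcongr
    _ = Ch2 μ (c • f) := by
        rw [← mul_assoc, ← ENNReal.ofReal_mul (sq_nonneg c), ← mul_pow, mul_inv_cancel₀ hc,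
          one_pow, ENNReal.ofReal_one, one_mul]

end Cheeger

theorem stmt15_general {M : Type*} [MetricSpace M]
    [MeasurableSpace M] [BorelSpace M]
    (μ : Measure M)
    (hriem : ∀ f g : M → ℝ,
      (∃ K : ℝ≥0, LipschitzWith K f) → (∃ K : ℝ≥0, LipschitzWith K g) →
      MemLp (lip f) 2 μ → MemLp (lip g) 2 μ →
      ∀ᵐ x ∂μ, lip (f + g) x ^ 2 + lip (f - g) x ^ 2 = 2 * lip f x ^ 2 + 2 * lip g x ^ 2)
    (f g : M → ℝ) :
    Ch2 μ (f + g) + Ch2 μ (f - g) = 2 * Ch2 μ f + 2 * Ch2 μ g := by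
  have hμ : IsInfinitesimallyRiemannian μ := hriem
  have hsum : (f + g) + (f - g) = (2 : ℝ) • f := by rw [two_smul]; abel
  have hdiff : (f + g) - (f - g) = (2 : ℝ) • g := by rw [two_smul]; abel
  have hfour : ENNReal.ofReal (2 ^ 2) = 2 * 2 := by norm_num
  have hge := hμ.Ch2_add_add_Ch2_sub_le (f + g) (f - g)
  rw [hsum, hdiff, Ch2_const_smul two_ne_zero, Ch2_const_smul two_ne_zero, hfour] at hge
  refine le_antisymm (hμ.Ch2_add_add_Ch2_sub_le f g)
    ((ENNReal.mul_le_mul_iff_right two_ne_zero ENNReal.ofNat_ne_top).1 ?_)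
  calc 2 * (2 * Ch2 μ f + 2 * Ch2 μ g) = 2 * 2 * Ch2 μ f + 2 * 2 * Ch2 μ g := by ring
    _ ≤ 2 * (Ch2 μ (f + g) + Ch2 μ (f - g)) := by rw [mul_add]; exact hge

/-- An infinitesimally Riemannian space (the parallelogram identity holds a.e. for local
Lipschitz constants) is infinitesimally Hilbertian: the Cheeger energy `Ch₂` is a quadratic
form on `L⁰(μ)`. -/
theorem stmt15 {M : Type*} [MetricSpace M] [CompleteSpace M]
    [MeasurableSpace M] [BorelSpace M]
    (μ : Measure M) [IsFiniteMeasureOnCompacts μ] [μ.Regular]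
    (hfin : ∀ s : Set M, Bornology.IsBounded s → μ s < ∞)
    (hriem : ∀ f g : M → ℝ,
      (∃ K : ℝ≥0, LipschitzWith K f) → (∃ K : ℝ≥0, LipschitzWith K g) →
      MemLp (lip f) 2 μ → MemLp (lip g) 2 μ →
      ∀ᵐ x ∂μ, lip (f + g) x ^ 2 + lip (f - g) x ^ 2 = 2 * lip f x ^ 2 + 2 * lip g x ^ 2)
    (f g : M → ℝ) (hf : Measurable f) (hg : Measurable g) :
    Ch2 μ (f + g) + Ch2 μ (f - g) = 2 * Ch2 μ f + 2 * Ch2 μ g :=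
  stmt15_general μ hriem f g
end
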